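/- Let B_{n,k} = (1/(n+1))·binom(2n+2, n−k)·binom(n+k, n) denote the entries of Borel's triangle (so that B_{n,0} = C_{n+1}, the (n+1)-st Catalan number, and binom(a,b) = 0 for b < 0 or b > a). Then for all integers n ≥ 1 and 1 ≤ k ≤ n+2, the identity B_{n,0}·binom(n+2, k) − B_{n,k} = B_{n+1, k−1} holds in ℚ. -/

import Mathlib

/-- The binomial coefficient `binom a b : ℚ` for integer arguments, equal to `0`
when `b < 0` or `b > a`. -/
def binom (a b : ℤ) : ℚ :=
  if 0 ≤ b ∧ b ≤ a then (a.toNat.choose b.toNat : ℚ) else 0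

/-- The entries of Borel's triangle: `B_{n,k} = (1/(n+1))·binom(2n+2, n−k)·binom(n+k, n)`. -/
noncomputable def borelT (n k : ℕ) : ℚ :=
  (1 / ((n : ℚ) + 1)) * binom (2 * (n : ℤ) + 2) ((n : ℤ) - k) * binom ((n : ℤ) + k) n

/-!
After multiplication by `(n+k+1)(n+k+2)` every term is a multiple of `B_{n,0}`: the absorption
identity `(N+1) binom(N,K) = (K+1) binom(N+1,K+1)` and the subset-of-a-subset identity
`binom(N,K) binom(K,S) = binom(N,S) binom(N-S,K-S)` give
`B_{n,k} (n+k+1)(n+k+2) = B_{n,0} binom(n,k) (n+1)(n+2) = B_{n,0} binom(n+2,k) (n+1-k)(n+2-k)` and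
`B_{n+1,k-1} (n+k+1)(n+k+2) = B_{n,0} binom(n+2,k) 2k(2n+3)`.
The identity then reduces to `(n+k+1)(n+k+2) - (n+1-k)(n+2-k) = 2k(2n+3)`.
-/

theorem binom_natCast (a b : ℕ) : binom a b = a.choose b := by
  by_cases h : b ≤ a
  · simp [binom, h]
  · simp [binom, h, Nat.choose_eq_zero_of_lt (not_le.mp h)]

theorem binom_of_neg {a b : ℤ} (hb : b < 0) : binom a b = 0 := by
  simp [binom, hb.not_ge]

/- By symmetry `binom (2n+2) (n-k) = binom (2n+2) (n+k+2)`, and this `Nat.choose` vanishes exactly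
when `n - k < 0`, so the formula holds for every `k`. -/
theorem borelT_eq_choose (n k : ℕ) :
    borelT n k = (2 * n + 2).choose (n + k + 2) * (n + k).choose n / (n + 1) := by
  have hsecond : binom ((n : ℤ) + k) n = (n + k).choose n := mod_cast binom_natCast (n + k) n
  rcases le_or_gt k n with h | h
  · have hfirst : binom (2 * (n : ℤ) + 2) ((n : ℤ) - k) = (2 * n + 2).choose (n + k + 2) := by
      rw [show (n : ℤ) - k = ((n - k : ℕ) : ℤ) by omega,
        show 2 * (n : ℤ) + 2 = ((2 * n + 2 : ℕ) : ℤ) by omega, binom_natCast,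
        Nat.choose_symm_of_eq_add (b := n + k + 2) (by omega)]
    rw [borelT, hfirst, hsecond]
    ring
  · rw [borelT, binom_of_neg (by omega), Nat.choose_eq_zero_of_lt (by omega)]
    simp

theorem Nat.add_two_choose_add_two_mul (n k : ℕ) :
    (n + 2).choose (k + 2) * ((k + 1) * (k + 2)) = n.choose k * ((n + 1) * (n + 2)) := by
  have h₁ := Nat.add_one_mul_choose_eq n k
  have h₂ := Nat.add_one_mul_choose_eq (n + 1) (k + 1)
  calc (n + 2).choose (k + 2) * ((k + 1) * (k + 2))
      = (n + 2).choose (k + 2) * (k + 2) * (k + 1) := by ring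
    _ = (n + 2) * ((n + 1).choose (k + 1) * (k + 1)) := by rw [← h₂]; ring
    _ = n.choose k * ((n + 1) * (n + 2)) := by rw [← h₁]; ring

theorem Nat.cast_choose_mul_succ_eq {R : Type*} [Ring R] (n k : ℕ) :
    (n.choose k : R) * (n + 1) = (n + 1).choose k * (n + 1 - k : R) := by
  rcases le_or_gt k (n + 1) with h | h
  · have := congrArg (Nat.cast : ℕ → R) (Nat.choose_mul_succ_eq n k)
    push_cast [Nat.cast_sub h] at this ⊢
    exact this
  · simp [Nat.choose_eq_zero_of_lt h, Nat.choose_eq_zero_of_lt (show n < k by omega)]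

theorem borelT_mul (n k : ℕ) :
    borelT n k * ((n + k + 1) * (n + k + 2)) = borelT n 0 * (n.choose k * ((n + 1) * (n + 2))) := by
  have e1 : ((n + k + 2).choose (n + 2) : ℚ) * ((n + 1) * (n + 2)) =
      (n + k).choose n * ((n + k + 1) * (n + k + 2)) := by
    exact_mod_cast Nat.add_two_choose_add_two_mul (n + k) n
  have e2 : ((2 * n + 2).choose (n + k + 2) : ℚ) * (n + k + 2).choose (n + 2) =
      (2 * n + 2).choose (n + 2) * n.choose k := by
    rw [← Nat.cast_mul, Nat.choose_mul (by omega), show 2 * n + 2 - (n + 2) = n by omega,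
      show n + k + 2 - (n + 2) = k by omega, Nat.cast_mul]
  rw [borelT_eq_choose, borelT_eq_choose]
  simp only [add_zero, Nat.choose_self, Nat.cast_one, mul_one]
  field_simp
  linear_combination (n + 1) * (n + 2) * e2 - ((2 * n + 2).choose (n + k + 2) : ℚ) * e1

theorem borelT_succ_mul (n m : ℕ) :
    borelT (n + 1) m * ((n + m + 2) * (n + m + 3)) =
      borelT n 0 * ((n + 2).choose (m + 1) * (2 * (m + 1) * (2 * n + 3))) := by
  have e1 : ((2 * n + 4).choose (n + m + 3) : ℚ) * ((n + m + 2) * (n + m + 3)) =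
      (2 * n + 2).choose (n + m + 1) * ((2 * n + 3) * (2 * n + 4)) := by
    exact_mod_cast Nat.add_two_choose_add_two_mul (2 * n + 2) (n + m + 1)
  have e2 : ((2 * n + 2).choose (n + m + 1) : ℚ) * (n + m + 1).choose (n + 1) =
      (2 * n + 2).choose (n + 1) * (n + 1).choose m := by
    rw [← Nat.cast_mul, Nat.choose_mul (by omega), show 2 * n + 2 - (n + 1) = n + 1 by omega,
      show n + m + 1 - (n + 1) = m by omega, Nat.cast_mul]
  have e3 : ((2 * n + 2).choose (n + 2) : ℚ) * (n + 2) =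
      (2 * n + 2).choose (n + 1) * (n + 1) := by
    exact_mod_cast (Nat.choose_succ_right_eq (2 * n + 2) (n + 1)).trans (by congr 1; omega)
  have e4 : (n + 2 : ℚ) * (n + 1).choose m = (n + 2).choose (m + 1) * (m + 1) := by
    exact_mod_cast Nat.add_one_mul_choose_eq (n + 1) m
  rw [borelT_eq_choose, borelT_eq_choose, show 2 * (n + 1) + 2 = 2 * n + 4 by ring,
    show n + 1 + m + 2 = n + m + 3 by ring, show n + 1 + m = n + m + 1 by ring]
  simp only [add_zero, Nat.choose_self, Nat.cast_one, mul_one]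
  field_simp
  push_cast
  linear_combination (n + 1) * ((n + m + 1).choose (n + 1) : ℚ) * e1
    + 2 * (n + 1) * (n + 2) * (2 * n + 3) * e2
    + 2 * (n + 2) * (2 * n + 3) * ((2 * n + 2).choose (n + 2) : ℚ) * e4
    - 2 * (n + 2) * (2 * n + 3) * ((n + 1).choose m : ℚ) * e3

theorem borel_recursion_general (n k : ℕ) (hk1 : 1 ≤ k) :
    borelT n 0 * binom ((n : ℤ) + 2) (k : ℤ) - borelT n k = borelT (n + 1) (k - 1) := by
  obtain ⟨m, rfl⟩ : ∃ m, k = m + 1 := ⟨k - 1, by omega⟩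
  have hbinom : binom ((n : ℤ) + 2) ((m + 1 : ℕ) : ℤ) = (n + 2).choose (m + 1) :=
    mod_cast binom_natCast (n + 2) (m + 1)
  have hcur := borelT_mul n (m + 1)
  have hnext := borelT_succ_mul n m
  have h₁ := Nat.cast_choose_mul_succ_eq (R := ℚ) n (m + 1)
  have h₂ := Nat.cast_choose_mul_succ_eq (R := ℚ) (n + 1) (m + 1)
  push_cast at hcur h₁ h₂
  have hD : ((n : ℚ) + m + 2) * (n + m + 3) ≠ 0 := by positivity
  apply mul_right_cancel₀ hD
  rw [hbinom, Nat.add_sub_cancel]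
  linear_combination -hcur - hnext - borelT n 0 * (n + 2) * h₁ - borelT n 0 * (n - m) * h₂

/-- For `n ≥ 1` and `1 ≤ k ≤ n+2`, the Borel triangle identity
`B_{n,0}·binom(n+2, k) − B_{n,k} = B_{n+1,k−1}` holds in `ℚ`. -/
theorem borel_recursion (n k : ℕ) (hn : 1 ≤ n) (hk1 : 1 ≤ k) (hk2 : k ≤ n + 2) :
    borelT n 0 * binom ((n : ℤ) + 2) (k : ℤ) - borelT n k = borelT (n + 1) (k - 1) :=
  borel_recursion_general n k hk1
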